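/- Let K be a compact metrizable group with Haar probability measure m, and let B ⊂ K be a finite subset with spectral gap κ ∈ (0,1], meaning that ‖(1/(2|B|))·Σ_{b∈B}(f∘ℓ_b + f∘ℓ_{b⁻¹})‖ ≤ (1−κ)‖f‖ for all f ∈ L²(K,m) with ∫ f dm = 0, where ℓ_b(x) = bx. Fix n ≥ 1 and define the operator P₁ on L²(Kⁿ, m^⊗n) by (P₁f)(x₁,…,xₙ) = (1/(2|B|))·Σ_{b∈B}[f(bx₁,…,bxₙ) + f(b⁻¹x₁,…,b⁻¹xₙ)]. Then: (i) P₁f = f for every f ∈ L²(Kⁿ,m^⊗n) satisfying f(kx₁,…,kxₙ) = f(x₁,…,xₙ) a.e. for every k ∈ K; and (ii) ‖P₁f‖ ≤ (1−κ)‖f‖ for every f ∈ L²(Kⁿ,m^⊗n) such that ∫_K f(kx₁,…,kxₙ) dm(k) = 0 for m^⊗n-almost every (x₁,…,xₙ). -/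

import Mathlib

open MeasureTheory
open scoped ENNReal NNReal BigOperators

/-!
The shear `(x₀, x₁, …, xₙ) ↦ (x₀, (x₀⁻¹x₁, …, x₀⁻¹xₙ))` preserves the Haar measure and turns the
diagonal left action of `K` on `Kⁿ⁺¹` into left translation of the first coordinate alone. In
these coordinates `P₁` is the Markov operator of `B` applied in each fibre `K × {y}`, and the
orbit-average condition says that almost every fibre has mean zero (here the right invariance
of Haar measure on a compact group enters). So the spectral gap applies fibre by fibre, and
Fubini adds the fibrewise estimates up.
-/

/-- The averaging (Markov) operator, at the level of functions, of the diagonal left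
translation action of a finite symmetrized set `B` on `Kⁿ`:
`(P₁f)(x₁,…,xₙ) = (1/(2|B|))·Σ_{b∈B}[f(bx₁,…,bxₙ) + f(b⁻¹x₁,…,b⁻¹xₙ)]`. -/
noncomputable def diagMarkov {K : Type*} [Group K] {n : ℕ} (B : Finset K)
    (f : (Fin n → K) → ℝ) (x : Fin n → K) : ℝ :=
  (1 / (2 * (B.card : ℝ))) * ∑ b ∈ B, (f (fun i => b * x i) + f (fun i => b⁻¹ * x i))

namespace MeasureTheory

variable {α β E : Type*} [MeasurableSpace α] [MeasurableSpace β] [NormedAddCommGroup E]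
  {μ : Measure α} {ν : Measure β} [SFinite μ] [SFinite ν] {p : ℝ≥0}

lemma eLpNorm_prod_rpow_eq_lintegral (hp : p ≠ 0) {F : α × β → E}
    (hF : AEStronglyMeasurable F (μ.prod ν)) :
    eLpNorm F p (μ.prod ν) ^ (p : ℝ) = ∫⁻ y, eLpNorm (fun x => F (x, y)) p μ ^ (p : ℝ) ∂ν := by
  simp only [eLpNorm_nnreal_pow_eq_lintegral hp]
  exact lintegral_prod_symm _ (hF.enorm.pow_const _)

lemma AEStronglyMeasurable.aemeasurable_eLpNorm_fiber_rpow (hp : p ≠ 0) {F : α × β → E}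
    (hF : AEStronglyMeasurable F (μ.prod ν)) :
    AEMeasurable (fun y => eLpNorm (fun x => F (x, y)) p μ ^ (p : ℝ)) ν := by
  simp only [eLpNorm_nnreal_pow_eq_lintegral hp]
  exact (hF.enorm.pow_const _).lintegral_prod_left'

lemma MemLp.ae_memLp_fiber (hp : p ≠ 0) {F : α × β → E} (hF : MemLp F p (μ.prod ν)) :
    ∀ᵐ y ∂ν, MemLp (fun x => F (x, y)) p μ := by
  have hfin : ∫⁻ y, eLpNorm (fun x => F (x, y)) p μ ^ (p : ℝ) ∂ν ≠ ∞ := by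
    rw [← eLpNorm_prod_rpow_eq_lintegral hp hF.1]
    exact ENNReal.rpow_ne_top_of_nonneg p.2 hF.2.ne
  filter_upwards [ae_lt_top' (hF.1.aemeasurable_eLpNorm_fiber_rpow hp) hfin,
    hF.1.prodMk_right] with y hy hFy
  exact ⟨hFy, (ENNReal.rpow_lt_top_iff_of_pos (by positivity)).1 hy⟩

lemma eLpNorm_prod_le_of_ae_fiber_le (hp : p ≠ 0) {F G : α × β → E}
    (hF : AEStronglyMeasurable F (μ.prod ν)) (hG : AEStronglyMeasurable G (μ.prod ν))
    {c : ℝ≥0∞}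
    (h : ∀ᵐ y ∂ν, eLpNorm (fun x => F (x, y)) p μ ≤ c * eLpNorm (fun x => G (x, y)) p μ) :
    eLpNorm F p (μ.prod ν) ≤ c * eLpNorm G p (μ.prod ν) := by
  have hp' : (0 : ℝ) < p := by positivity
  rw [← ENNReal.rpow_le_rpow_iff hp', ENNReal.mul_rpow_of_nonneg _ _ hp'.le,
    eLpNorm_prod_rpow_eq_lintegral hp hF, eLpNorm_prod_rpow_eq_lintegral hp hG,
    ← lintegral_const_mul'' _ (hG.aemeasurable_eLpNorm_fiber_rpow hp)]
  refine lintegral_mono_ae (h.mono fun y hy => ?_)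
  rw [← ENNReal.mul_rpow_of_nonneg _ _ hp'.le]
  exact ENNReal.rpow_le_rpow hy hp'.le

end MeasureTheory

section Markov

variable {K X : Type*} [Group K] [MulAction K X]

/-- For the diagonal action on `Fin n → K`, `markov B` is `diagMarkov B`; for `K` acting on
itself, it is the operator in the spectral gap hypothesis (both definitionally). -/
noncomputable def markov (B : Finset K) (f : X → ℝ) (x : X) : ℝ :=
  (1 / (2 * (B.card : ℝ))) * ∑ b ∈ B, (f (b • x) + f (b⁻¹ • x))

lemma markov_ae_eq_self_of_invariant [MeasurableSpace X] {μ : Measure X} {B : Finset K}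
    (hB : B.Nonempty) {f : X → ℝ} (hf : ∀ k : K, (fun x => f (k • x)) =ᵐ[μ] f) :
    markov B f =ᵐ[μ] f := by
  have hf_all : ∀ᵐ x ∂μ, ∀ b : B, f ((b : K) • x) = f x ∧ f ((b : K)⁻¹ • x) = f x :=
    ae_all_iff.2 fun b => (hf b).and (hf (b : K)⁻¹)
  filter_upwards [hf_all] with x hx
  have hsum : ∑ b ∈ B, (f (b • x) + f (b⁻¹ • x)) = ∑ _b ∈ B, 2 * f x :=
    Finset.sum_congr rfl fun b hb => by rw [(hx ⟨b, hb⟩).1, (hx ⟨b, hb⟩).2, two_mul]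
  have hcard : (B.card : ℝ) ≠ 0 := by exact_mod_cast hB.card_pos.ne'
  rw [markov, hsum, Finset.sum_const, nsmul_eq_mul]
  field_simp

end Markov

section Product

variable {K Y : Type*} [Group K] [MeasurableSpace K] [MeasurableMul K] [MeasurableSpace Y]
  {m : Measure K} [SFinite m] [m.IsMulLeftInvariant] {ν : Measure Y} [SFinite ν]

lemma aestronglyMeasurable_markov_fst (B : Finset K) {g : K × Y → ℝ}
    (hg : AEStronglyMeasurable g (m.prod ν)) :
    AEStronglyMeasurable (fun p : K × Y => markov B (fun a => g (a, p.2)) p.1) (m.prod ν) := by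
  have htranslate (b : K) : AEStronglyMeasurable (fun p : K × Y => g (b * p.1, p.2)) (m.prod ν) :=
    hg.comp_measurePreserving ((measurePreserving_mul_left m b).prod (.id ν))
  exact (Finset.aestronglyMeasurable_fun_sum B fun b _ =>
    (htranslate b).add (htranslate b⁻¹)).const_mul _

lemma eLpNorm_markov_fst_le (B : Finset K) {c : ℝ≥0∞}
    (hgap : ∀ f : K → ℝ, MemLp f 2 m → ∫ x, f x ∂m = 0 →
      eLpNorm (markov B f) 2 m ≤ c * eLpNorm f 2 m)
    {g : K × Y → ℝ} (hg : MemLp g 2 (m.prod ν)) (hg0 : ∀ᵐ y ∂ν, ∫ a, g (a, y) ∂m = 0) :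
    eLpNorm (fun p : K × Y => markov B (fun a => g (a, p.2)) p.1) 2 (m.prod ν) ≤
      c * eLpNorm g 2 (m.prod ν) := by
  have hg' : MemLp g ((2 : ℝ≥0) : ℝ≥0∞) (m.prod ν) := by simpa using hg
  have := eLpNorm_prod_le_of_ae_fiber_le two_ne_zero
    (aestronglyMeasurable_markov_fst B hg.1) hg.1 (c := c) ?_
  · simpa using this
  filter_upwards [hg'.ae_memLp_fiber two_ne_zero, hg0] with y hy hy0
  simpa using hgap _ (by simpa using hy) hy0

end Product

section DiagShear

variable (K : Type*) [Group K] [MeasurableSpace K] [MeasurableMul₂ K] [MeasurableInv K]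

def diagShear (n : ℕ) : (Fin (n + 1) → K) ≃ᵐ K × (Fin n → K) where
  toFun x := (x 0, fun i => (x 0)⁻¹ * x i.succ)
  invFun p := Fin.cons p.1 fun i => p.1 * p.2 i
  left_inv x := by ext i; cases i using Fin.cases <;> simp
  right_inv p := by ext <;> simp
  measurable_toFun := by
    change Measurable fun x : Fin (n + 1) → K => (x 0, fun i : Fin n => (x 0)⁻¹ * x i.succ)
    fun_prop
  measurable_invFun := by
    change Measurable fun p : K × (Fin n → K) =>
      (Fin.cons p.1 fun i => p.1 * p.2 i : Fin (n + 1) → K)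
    refine measurable_pi_iff.2 fun i => ?_
    cases i using Fin.cases <;> simp only [Fin.cons_zero, Fin.cons_succ] <;> fun_prop

variable {K}

lemma diagShear_smul {n : ℕ} (k : K) (x : Fin (n + 1) → K) :
    diagShear K n (k • x) = (k * (diagShear K n x).1, (diagShear K n x).2) := by
  ext <;> simp [diagShear, mul_assoc]

lemma measurePreserving_diagShear (m : Measure K) [SigmaFinite m] [m.IsMulLeftInvariant]
    (n : ℕ) :
    MeasurePreserving (diagShear K n) (Measure.pi fun _ => m)
      (m.prod (Measure.pi fun _ => m)) := by
  have hsplit := measurePreserving_piFinSuccAbove (fun _ : Fin (n + 1) => m) 0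
  have hshear : MeasurePreserving (fun p : K × (Fin n → K) => (p.1, p.1⁻¹ • p.2))
      (m.prod (Measure.pi fun _ => m)) (m.prod (Measure.pi fun _ => m)) :=
    (MeasurePreserving.id m).skew_product (by fun_prop) <|
      ae_of_all _ fun a => map_mul_left_eq_self _ (fun _ => a⁻¹)
  exact hshear.comp hsplit

end DiagShear

section Diagonal

variable {K : Type*} [Group K] [MeasurableSpace K] [MeasurableMul₂ K] [MeasurableInv K]
  {m : Measure K} [SigmaFinite m] [NeZero m] [m.IsMulLeftInvariant] [m.IsMulRightInvariant]

lemma eLpNorm_markov_pi_le {n : ℕ} (B : Finset K) {c : ℝ≥0∞}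
    (hgap : ∀ f : K → ℝ, MemLp f 2 m → ∫ x, f x ∂m = 0 →
      eLpNorm (markov B f) 2 m ≤ c * eLpNorm f 2 m)
    {f : (Fin (n + 1) → K) → ℝ} (hf : MemLp f 2 (Measure.pi fun _ => m))
    (hf0 : ∀ᵐ x ∂(Measure.pi fun _ => m), ∫ k, f (k • x) ∂m = 0) :
    eLpNorm (markov B f) 2 (Measure.pi fun _ => m) ≤ c * eLpNorm f 2 (Measure.pi fun _ => m) := by
  set Φ := diagShear K n
  have hΦ : MeasurePreserving Φ _ _ := measurePreserving_diagShear m n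
  have eLpNorm_comp_Φ (F : K × (Fin n → K) → ℝ) :
      eLpNorm (F ∘ Φ) 2 (Measure.pi fun _ => m) =
        eLpNorm F 2 (m.prod (Measure.pi fun _ => m)) := by
    rw [← hΦ.map_eq, Φ.measurableEmbedding.eLpNorm_map_measure]
  obtain ⟨g, rfl⟩ : ∃ g, f = g ∘ Φ := ⟨f ∘ Φ.symm, by ext; simp⟩
  have hmarkov : markov B (g ∘ Φ) = (fun p => markov B (fun a => g (a, p.2)) p.1) ∘ Φ := by
    ext x
    simp [markov, Φ, diagShear_smul]
  have hg0 : ∀ᵐ y ∂(Measure.pi fun _ => m), ∫ a, g (a, y) ∂m = 0 := by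
    have h : ∀ᵐ p ∂(m.prod (Measure.pi fun _ => m)), ∫ a, g (a, p.2) ∂m = 0 := by
      filter_upwards [(hΦ.symm Φ).quasiMeasurePreserving.ae hf0] with p hp
      simpa [Φ, diagShear_smul, integral_mul_right_eq_self (fun a => g (a, p.2))] using hp
    obtain ⟨_, hy⟩ := (Measure.ae_ae_of_ae_prod h).exists
    exact hy
  rw [hmarkov, eLpNorm_comp_Φ, eLpNorm_comp_Φ]
  have hg : MemLp g 2 (m.prod (Measure.pi fun _ => m)) := by
    simpa [Function.comp_assoc] using hf.comp_measurePreserving (hΦ.symm Φ)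
  exact eLpNorm_markov_fst_le B hgap hg hg0

end Diagonal

lemma MeasureTheory.Measure.isMulRightInvariant_of_isProbabilityMeasure {G : Type*} [Group G]
    [TopologicalSpace G] [IsTopologicalGroup G] [LocallyCompactSpace G] [MeasurableSpace G]
    [BorelSpace G] (μ : Measure G) [μ.IsHaarMeasure] [IsProbabilityMeasure μ] :
    μ.IsMulRightInvariant where
  map_mul_right_eq_self a :=
    have : IsProbabilityMeasure (μ.map (· * a)) :=
      isProbabilityMeasure_map (measurable_mul_const a).aemeasurable
    isHaarMeasure_eq_of_isProbabilityMeasure _ _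

theorem diag_markov_spectral_gap_general
    {K : Type*} [Group K] [TopologicalSpace K] [IsTopologicalGroup K] [CompactSpace K]
    [TopologicalSpace.MetrizableSpace K] [MeasurableSpace K] [BorelSpace K]
    (m : Measure K) [m.IsHaarMeasure] [IsProbabilityMeasure m]
    (B : Finset K) (hB : B.Nonempty)
    (κ : ℝ)
    (hgap : ∀ f : K → ℝ, MemLp f 2 m → (∫ x, f x ∂m) = 0 →
      eLpNorm (fun x => (1 / (2 * (B.card : ℝ))) *
          ∑ b ∈ B, (f (b * x) + f (b⁻¹ * x))) 2 m ≤
        ENNReal.ofReal (1 - κ) * eLpNorm f 2 m)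
    (n : ℕ) (hn : 1 ≤ n) :
    (∀ f : (Fin n → K) → ℝ, MemLp f 2 (Measure.pi fun _ : Fin n => m) →
      (∀ k : K, (fun x : Fin n → K => f fun i => k * x i)
          =ᵐ[Measure.pi fun _ : Fin n => m] f) →
      diagMarkov B f =ᵐ[Measure.pi fun _ : Fin n => m] f) ∧
    (∀ f : (Fin n → K) → ℝ, MemLp f 2 (Measure.pi fun _ : Fin n => m) →
      (∀ᵐ x ∂(Measure.pi fun _ : Fin n => m), (∫ k, f (fun i => k * x i) ∂m) = 0) →
      eLpNorm (diagMarkov B f) 2 (Measure.pi fun _ : Fin n => m) ≤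
        ENNReal.ofReal (1 - κ) * eLpNorm f 2 (Measure.pi fun _ : Fin n => m)) := by
  refine ⟨fun f _ hf => markov_ae_eq_self_of_invariant hB hf, ?_⟩
  obtain ⟨n, rfl⟩ : ∃ n', n = n' + 1 := Nat.exists_eq_add_of_le' hn
  have : SecondCountableTopology K :=
    let := TopologicalSpace.metrizableSpaceMetric K; inferInstance
  have := m.isMulRightInvariant_of_isProbabilityMeasure
  exact fun f hf hf0 => eLpNorm_markov_pi_le B hgap hf hf0

/-- Let `K` be a compact metrizable group with Haar probability measure `m` and `B ⊂ K`
a finite subset with spectral gap `κ ∈ (0,1]` on `L²₀(K,m)`. Then on `L²(Kⁿ,m^⊗n)` the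
diagonal Markov operator `P₁` of `B`: (i) fixes every function invariant under the diagonal
left translation action of `K`; and (ii) contracts by `(1−κ)` every function whose average
over the diagonal `K`-orbits vanishes a.e. -/
theorem diag_markov_spectral_gap
    {K : Type*} [Group K] [TopologicalSpace K] [IsTopologicalGroup K] [CompactSpace K]
    [TopologicalSpace.MetrizableSpace K] [MeasurableSpace K] [BorelSpace K]
    (m : Measure K) [m.IsHaarMeasure] [IsProbabilityMeasure m]
    (B : Finset K) (hB : B.Nonempty)
    (κ : ℝ) (hκ0 : 0 < κ) (hκ1 : κ ≤ 1)
    (hgap : ∀ f : K → ℝ, MemLp f 2 m → (∫ x, f x ∂m) = 0 →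
      eLpNorm (fun x => (1 / (2 * (B.card : ℝ))) *
          ∑ b ∈ B, (f (b * x) + f (b⁻¹ * x))) 2 m ≤
        ENNReal.ofReal (1 - κ) * eLpNorm f 2 m)
    (n : ℕ) (hn : 1 ≤ n) :
    (∀ f : (Fin n → K) → ℝ, MemLp f 2 (Measure.pi fun _ : Fin n => m) →
      (∀ k : K, (fun x : Fin n → K => f fun i => k * x i)
          =ᵐ[Measure.pi fun _ : Fin n => m] f) →
      diagMarkov B f =ᵐ[Measure.pi fun _ : Fin n => m] f) ∧
    (∀ f : (Fin n → K) → ℝ, MemLp f 2 (Measure.pi fun _ : Fin n => m) →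
      (∀ᵐ x ∂(Measure.pi fun _ : Fin n => m), (∫ k, f (fun i => k * x i) ∂m) = 0) →
      eLpNorm (diagMarkov B f) 2 (Measure.pi fun _ : Fin n => m) ≤
        ENNReal.ofReal (1 - κ) * eLpNorm f 2 (Measure.pi fun _ : Fin n => m)) :=
  diag_markov_spectral_gap_general m B hB κ hgap n hn
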